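/- Under the paired matrix Gaussian model, for all 1 ≤ i, j ≤ p, E[(nq)^{-1} Σ_{k=1}^n Σ_{l=1}^q ε^{(1)}_{k,i,l} ε^{(2)}_{k,j,l}] = (r^{(1)}_{i,i} r^{(2)}_{j,j})^{1/2} · ρ_{S_{1,2},i,j} · tr(P_{T_{1,2}})/q. -/

import Mathlib

open Filter Matrix
open scoped BigOperators ENNReal

noncomputable section

/-- A family of real random variables is centered jointly Gaussian with covariance matrix `C`
if every linear combination has the centered one-dimensional Gaussian law with the
corresponding variance. -/
def IsCenteredGaussianFamily {Ω : Type*} [MeasurableSpace Ω] (μ : MeasureTheory.Measure Ω)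
    {ι : Type*} [Fintype ι] (Z : ι → Ω → ℝ) (C : Matrix ι ι ℝ) : Prop :=
  ∀ a : ι → ℝ,
    μ.map (fun ω => ∑ i, a i * Z i ω)
      = ProbabilityTheory.gaussianReal 0 (Real.toNNReal (∑ i, ∑ j, a i * C i j * a j))

/-- The covariance matrix of the stacked vector `(vec X⁽¹⁾, vec X⁽²⁾)` in the paired
matrix Gaussian model, with diagonal blocks `Σ_{S_t} ⊗ Σ_{T_t}` and off-diagonal blocks
`Σ_{S_{1,2}} ⊗ Σ_{T_{1,2}}` (and its transpose). -/
def pairCov {p q : ℕ} (S1 S2 S12 : Matrix (Fin p) (Fin p) ℝ)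
    (T1 T2 T12 : Matrix (Fin q) (Fin q) ℝ) :
    Matrix (Fin 2 × Fin p × Fin q) (Fin 2 × Fin p × Fin q) ℝ :=
  Matrix.of fun a b =>
    if a.1 = 0 then
      (if b.1 = 0 then S1 a.2.1 b.2.1 * T1 a.2.2 b.2.2
       else S12 a.2.1 b.2.1 * T12 a.2.2 b.2.2)
    else
      (if b.1 = 0 then S12 b.2.1 a.2.1 * T12 b.2.2 a.2.2
       else S2 a.2.1 b.2.1 * T2 a.2.2 b.2.2)

/-- Covariance of two real random variables. -/
def cov {Ω : Type*} [MeasurableSpace Ω] (μ : MeasureTheory.Measure Ω) (f g : Ω → ℝ) : ℝ :=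
  ∫ ω, (f ω - ∫ x, f x ∂μ) * (g ω - ∫ x, g x ∂μ) ∂μ

/-- Pearson correlation of two real random variables. -/
def corr {Ω : Type*} [MeasurableSpace Ω] (μ : MeasureTheory.Measure Ω) (f g : Ω → ℝ) : ℝ :=
  cov μ f g / Real.sqrt (ProbabilityTheory.variance f μ * ProbabilityTheory.variance g μ)

/-- Squared Frobenius norm of a matrix. -/
def frobSq {m : ℕ} (A : Matrix (Fin m) (Fin m) ℝ) : ℝ := ∑ i, ∑ j, (A i j) ^ 2

/-- Matrix 1-norm `max_j ∑_i |a_{i,j}|`. -/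
def L1norm {m : ℕ} (A : Matrix (Fin m) (Fin m) ℝ) : ℝ := ⨆ j, ∑ i, |A i j|

/-- Spectral (operator) norm of a matrix. -/
def specNorm {m : ℕ} (A : Matrix (Fin m) (Fin m) ℝ) : ℝ :=
  ⨆ v : {v : Fin m → ℝ // v ⬝ᵥ v ≤ 1}, Real.sqrt (A.mulVec v ⬝ᵥ A.mulVec v)

/-- Standard normal cumulative distribution function. -/
def Phi (x : ℝ) : ℝ := ((ProbabilityTheory.gaussianReal 0 1) (Set.Iic x)).toReal

/-- The old Mathlib `Matrix.PosSemidef.sqrt` (removed since), with its old definition. -/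
def posSemidefSqrt {n : Type*} [Fintype n] [DecidableEq n] {A : Matrix n n ℝ}
    (hA : A.PosSemidef) : Matrix n n ℝ :=
  hA.1.eigenvectorUnitary.1 * Matrix.diagonal ((↑) ∘ (√·) ∘ hA.1.eigenvalues) *
    (star hA.1.eigenvectorUnitary : Matrix n n ℝ)

/-- The paired matrix Gaussian model: `n` i.i.d. pairs of `p × q` random matrices whose
stacked vectors are centered Gaussian with separable (Kronecker) covariance structure. -/
structure PairedModel where
  n : ℕ
  p : ℕ
  q : ℕ
  npos : 0 < n
  ppos : 0 < p
  qpos : 0 < q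
  Ω : Type
  [mΩ : MeasurableSpace Ω]
  μ : MeasureTheory.Measure Ω
  probμ : MeasureTheory.IsProbabilityMeasure μ
  SigS : Fin 2 → Matrix (Fin p) (Fin p) ℝ
  SigT : Fin 2 → Matrix (Fin q) (Fin q) ℝ
  SigS12 : Matrix (Fin p) (Fin p) ℝ
  SigT12 : Matrix (Fin q) (Fin q) ℝ
  hSigS : ∀ t, (SigS t).PosDef
  hSigT : ∀ t, (SigT t).PosDef
  hSig : (pairCov (SigS 0) (SigS 1) SigS12 (SigT 0) (SigT 1) SigT12).PosSemidef
  X : Fin n → Fin 2 → Ω → Matrix (Fin p) (Fin q) ℝ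
  measX : ∀ k t i l, Measurable fun ω => X k t ω i l
  gaussX : ∀ k, IsCenteredGaussianFamily μ
      (fun tl ω => X k tl.1 ω tl.2.1 tl.2.2)
      (pairCov (SigS 0) (SigS 1) SigS12 (SigT 0) (SigT 1) SigT12)
  iidX : ProbabilityTheory.iIndepFun
      (fun k ω (tl : Fin 2 × Fin p × Fin q) => X k tl.1 ω tl.2.1 tl.2.2) μ
  identX : ∀ k k' : Fin n, ProbabilityTheory.IdentDistrib
      (fun ω (tl : Fin 2 × Fin p × Fin q) => X k tl.1 ω tl.2.1 tl.2.2)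
      (fun ω (tl : Fin 2 × Fin p × Fin q) => X k' tl.1 ω tl.2.1 tl.2.2) μ μ

attribute [instance] PairedModel.mΩ PairedModel.probμ

namespace PairedModel

variable (M : PairedModel)

/-- `Σ_{T_t}^{-1/2}`. -/
def invSqrtT (t : Fin 2) : Matrix (Fin M.q) (Fin M.q) ℝ := (posSemidefSqrt (M.hSigT t).posSemidef)⁻¹

/-- `P_{T_{1,2}} = Σ_{T_1}^{-1/2} Σ_{T_{1,2}} Σ_{T_2}^{-1/2}`. -/
def PT12 : Matrix (Fin M.q) (Fin M.q) ℝ := M.invSqrtT 0 * M.SigT12 * M.invSqrtT 1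

/-- Spatial precision matrices `Ω_{S_t} = Σ_{S_t}⁻¹`. -/
def ΩS (t : Fin 2) : Matrix (Fin M.p) (Fin M.p) ℝ := (M.SigS t)⁻¹

/-- The whitened observations `Y_k^{(t)} = X_k^{(t)} Σ_{T_t}^{-1/2}`. -/
def Y (k : Fin M.n) (t : Fin 2) (ω : M.Ω) : Matrix (Fin M.p) (Fin M.q) ℝ :=
  M.X k t ω * M.invSqrtT t

/-- Population regression coefficients `β_i^{(t)}`, as `β^{(t)}_{i,j} = -ω_{S_t,i,j}/ω_{S_t,i,i}`
for `j ≠ i` (the value at `j = i` is irrelevant). -/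
def β (t : Fin 2) (i j : Fin M.p) : ℝ := -(M.ΩS t i j) / M.ΩS t i i

/-- Regression errors `ε^{(t)}_{k,i,l} = Y^{(t)}_{k,i,l} − Σ_{j ≠ i} β^{(t)}_{i,j} Y^{(t)}_{k,j,l}`. -/
def ε (k : Fin M.n) (t : Fin 2) (i : Fin M.p) (l : Fin M.q) (ω : M.Ω) : ℝ :=
  M.Y k t ω i l - ∑ j ∈ Finset.univ.erase i, M.β t i j * M.Y k t ω j l

/-- `r^{(t)}_{i,j} = ω_{S_t,i,j}/(ω_{S_t,i,i} ω_{S_t,j,j})`. -/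
def r (t : Fin 2) (i j : Fin M.p) : ℝ := M.ΩS t i j / (M.ΩS t i i * M.ΩS t j j)

/-- `ρ^{(t)}_{i,j} = r^{(t)}_{i,j}/(r^{(t)}_{i,i} r^{(t)}_{j,j})^{1/2}`. -/
def ρ (t : Fin 2) (i j : Fin M.p) : ℝ := M.r t i j / Real.sqrt (M.r t i i * M.r t j j)

/-- Partial correlations `ρ_{S_t,i,j} = ω_{S_t,i,j}/(ω_{S_t,i,i} ω_{S_t,j,j})^{1/2}`. -/
def ρS (t : Fin 2) (i j : Fin M.p) : ℝ :=
  M.ΩS t i j / Real.sqrt (M.ΩS t i i * M.ΩS t j j)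

/-- `U^{(t)}_{i,j}`. -/
def U (t : Fin 2) (i j : Fin M.p) (ω : M.Ω) : ℝ :=
  (1 / (M.n * M.q : ℝ)) * ∑ k, ∑ l,
    (M.ε k t i l ω * M.ε k t j l ω - ∫ ω', M.ε k t i l ω' * M.ε k t j l ω' ∂M.μ)

/-- `Ũ^{(t)}_{i,j} = (r^{(t)}_{i,j} − U^{(t)}_{i,j})/(r^{(t)}_{i,i} r^{(t)}_{j,j})^{1/2}`. -/
def Utilde (t : Fin 2) (i j : Fin M.p) (ω : M.Ω) : ℝ :=
  (M.r t i j - M.U t i j ω) / Real.sqrt (M.r t i i * M.r t j j)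

/-- `θ^{(t)}_{i,j} = Var(Ũ^{(t)}_{i,j})`. -/
def θ (t : Fin 2) (i j : Fin M.p) : ℝ := ProbabilityTheory.variance (M.Utilde t i j) M.μ

/-- `Θ_{i,j} = Var(Ũ^{(1)}_{i,j} − Ũ^{(2)}_{i,j})`. -/
def Θ (i j : Fin M.p) : ℝ :=
  ProbabilityTheory.variance (fun ω => M.Utilde 0 i j ω - M.Utilde 1 i j ω) M.μ

/-- `ρ_{S_{1,2},i,j} = (r^{(1)}_{i,i} r^{(2)}_{j,j})^{1/2} · Ω_{S_1,i,·} Σ_{S_{1,2}} Ω_{S_2,·,j}`. -/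
def ρS12 (i j : Fin M.p) : ℝ :=
  Real.sqrt (M.r 0 i i * M.r 1 j j) * ∑ a, ∑ b, M.ΩS 0 i a * M.SigS12 a b * M.ΩS 1 b j

/-- Assumption (A1), with constants `c0, c1, c2`: the eigenvalues of the spatial and temporal
precision matrices lie in `[c0⁻¹, c0]`; the scaled operator norms of `P_{T_{1,2}}` and
`Σ_{S_{1,2}}` are bounded by `c1`; and `|tr(P_{T_{1,2}}) tr(Σ_{S_{1,2}})|/(pq) ≥ c2`. -/
def A1 (c0 c1 c2 : ℝ) : Prop :=
  (∀ t : Fin 2, ∀ v : Fin M.p → ℝ,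
      c0⁻¹ * (v ⬝ᵥ v) ≤ v ⬝ᵥ (M.ΩS t).mulVec v ∧ v ⬝ᵥ (M.ΩS t).mulVec v ≤ c0 * (v ⬝ᵥ v)) ∧
  (∀ t : Fin 2, ∀ v : Fin M.q → ℝ,
      c0⁻¹ * (v ⬝ᵥ v) ≤ v ⬝ᵥ ((M.SigT t)⁻¹).mulVec v ∧
        v ⬝ᵥ ((M.SigT t)⁻¹).mulVec v ≤ c0 * (v ⬝ᵥ v)) ∧
  (∀ v : Fin M.q → ℝ,
      |Matrix.trace M.SigS12| / M.p * Real.sqrt (M.PT12.mulVec v ⬝ᵥ M.PT12.mulVec v)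
        ≤ c1 * Real.sqrt (v ⬝ᵥ v)) ∧
  (∀ v : Fin M.p → ℝ,
      |Matrix.trace M.PT12| / M.q * Real.sqrt (M.SigS12.mulVec v ⬝ᵥ M.SigS12.mulVec v)
        ≤ c1 * Real.sqrt (v ⬝ᵥ v)) ∧
  c2 ≤ |Matrix.trace M.PT12 * Matrix.trace M.SigS12| / (M.p * M.q)

end PairedModel


namespace PairedModel

variable (M : PairedModel)

/-- Sample means `Ȳ^{(t)}_i` of the whitened data. -/
def Ybar (t : Fin 2) (i : Fin M.p) (ω : M.Ω) : ℝ :=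
  (1 / (M.n * M.q : ℝ)) * ∑ k, ∑ l, M.Y k t ω i l

/-- Residuals `ε̂^{(t)}_{k,i,l}` built from estimated regression coefficients `b`. -/
def εhat (b : Fin 2 → Fin M.p → M.Ω → Fin M.p → ℝ) (k : Fin M.n) (t : Fin 2)
    (i : Fin M.p) (l : Fin M.q) (ω : M.Ω) : ℝ :=
  M.Y k t ω i l - M.Ybar t i ω
    - ∑ j ∈ Finset.univ.erase i, b t i ω j * (M.Y k t ω j l - M.Ybar t j ω)

/-- `r̃^{(t)}_{i,j}`, the sample covariance of the residuals. -/
def rtil (b : Fin 2 → Fin M.p → M.Ω → Fin M.p → ℝ) (t : Fin 2) (i j : Fin M.p) (ω : M.Ω) : ℝ :=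
  (1 / (M.n * M.q : ℝ)) * ∑ k, ∑ l, M.εhat b k t i l ω * M.εhat b k t j l ω

/-- Bias-corrected estimator `r̂^{(t)}_{i,j}` (for `i = j` it is `r̃^{(t)}_{i,i}`, for `i ≠ j`
it is the bias-corrected formula, used for `i < j`). -/
def rhat (b : Fin 2 → Fin M.p → M.Ω → Fin M.p → ℝ) (t : Fin 2) (i j : Fin M.p) (ω : M.Ω) : ℝ :=
  if i = j then M.rtil b t i i ω
  else -(M.rtil b t i j ω + M.rtil b t i i ω * b t i ω j + M.rtil b t j j ω * b t j ω i)

/-- `θ̂^{(t)}_{i,j}`. -/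
def θhat (b : Fin 2 → Fin M.p → M.Ω → Fin M.p → ℝ) (t : Fin 2) (i j : Fin M.p) (ω : M.Ω) : ℝ :=
  (1 / (M.n * M.q : ℝ)) * (1 + (b t i ω j) ^ 2 * M.rhat b t i i ω / M.rhat b t j j ω)

/-- `ϱ̂^{(1,2)}_{i,j}`. -/
def ϱhat (b : Fin 2 → Fin M.p → M.Ω → Fin M.p → ℝ) (i j : Fin M.p) (ω : M.Ω) : ℝ :=
  ((1 / (M.n * M.q : ℝ)) * ∑ k, ∑ l, M.εhat b k 0 i l ω * M.εhat b k 1 j l ω)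
    / Real.sqrt (M.rhat b 0 i i ω * M.rhat b 1 j j ω)

/-- The variance-corrected estimator `Θ̂_{i,j}` (temporal covariances known). -/
def Θhat (b : Fin 2 → Fin M.p → M.Ω → Fin M.p → ℝ) (i j : Fin M.p) (ω : M.Ω) : ℝ :=
  M.θhat b 0 i j ω + M.θhat b 1 i j ω
    - (2 / (M.n * M.q : ℝ))
      * (M.ϱhat b i i ω * M.ϱhat b j j ω + M.ϱhat b i j ω * M.ϱhat b j i ω)
      * ((M.q : ℝ) * frobSq M.PT12 / (Matrix.trace M.PT12) ^ 2)

/-- `ρ̂_{S_t,i,j}`. -/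
def ρShat (b : Fin 2 → Fin M.p → M.Ω → Fin M.p → ℝ) (t : Fin 2) (i j : Fin M.p) (ω : M.Ω) : ℝ :=
  M.rhat b t i j ω / Real.sqrt (M.rhat b t i i ω * M.rhat b t j j ω)

/-- The paired-test statistic `W_{i,j}` (temporal covariances known). -/
def W (b : Fin 2 → Fin M.p → M.Ω → Fin M.p → ℝ) (i j : Fin M.p) (ω : M.Ω) : ℝ :=
  (M.ρShat b 0 i j ω - M.ρShat b 1 i j ω) / Real.sqrt (M.Θhat b i j ω)

section DataDriven

variable (R : Fin 2 → M.Ω → Matrix (Fin M.q) (Fin M.q) ℝ)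
variable (b : Fin 2 → Fin M.p → M.Ω → Fin M.p → ℝ)

/-- Data-driven whitened observations `Y_k^{(t,d)} = X_k^{(t)} Σ̂_{T_t}^{-1/2}`, where
`R t ω` is the (random) estimator `Σ̂_{T_t}^{-1/2}`. -/
def Yd (k : Fin M.n) (t : Fin 2) (ω : M.Ω) : Matrix (Fin M.p) (Fin M.q) ℝ :=
  M.X k t ω * R t ω

/-- Sample means of the data-driven whitened data. -/
def Ybard (t : Fin 2) (i : Fin M.p) (ω : M.Ω) : ℝ :=
  (1 / (M.n * M.q : ℝ)) * ∑ k, ∑ l, M.Yd R k t ω i l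

/-- Data-driven residuals `ε̂^{(t,d)}_{k,i,l}`. -/
def εhatd (k : Fin M.n) (t : Fin 2) (i : Fin M.p) (l : Fin M.q) (ω : M.Ω) : ℝ :=
  M.Yd R k t ω i l - M.Ybard R t i ω
    - ∑ j ∈ Finset.univ.erase i, b t i ω j * (M.Yd R k t ω j l - M.Ybard R t j ω)

/-- `r̃^{(t,d)}_{i,j}`. -/
def rtild (t : Fin 2) (i j : Fin M.p) (ω : M.Ω) : ℝ :=
  (1 / (M.n * M.q : ℝ)) * ∑ k, ∑ l, M.εhatd R b k t i l ω * M.εhatd R b k t j l ω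

/-- `r̂^{(t,d)}_{i,j}`. -/
def rhatd (t : Fin 2) (i j : Fin M.p) (ω : M.Ω) : ℝ :=
  if i = j then M.rtild R b t i i ω
  else -(M.rtild R b t i j ω + M.rtild R b t i i ω * b t i ω j
          + M.rtild R b t j j ω * b t j ω i)

/-- `θ̂^{(t,d)}_{i,j}`. -/
def θhatd (t : Fin 2) (i j : Fin M.p) (ω : M.Ω) : ℝ :=
  (1 / (M.n * M.q : ℝ)) * (1 + (b t i ω j) ^ 2 * M.rhatd R b t i i ω / M.rhatd R b t j j ω)

/-- `ϱ̂^{(1,2,d)}_{i,j}`. -/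
def ϱhatd (i j : Fin M.p) (ω : M.Ω) : ℝ :=
  ((1 / (M.n * M.q : ℝ)) * ∑ k, ∑ l, M.εhatd R b k 0 i l ω * M.εhatd R b k 1 j l ω)
    / Real.sqrt (M.rhatd R b 0 i i ω * M.rhatd R b 1 j j ω)

/-- Row-pooled means of the data-driven whitened data. -/
def YbarRowd (t : Fin 2) (l : Fin M.q) (ω : M.Ω) : ℝ :=
  (1 / (M.n * M.p : ℝ)) * ∑ k, ∑ i, M.Yd R k t ω i l

/-- The pooled estimator `P̂^{(d)}_{T_{1,2}}`. -/
def Phatd (ω : M.Ω) : Matrix (Fin M.q) (Fin M.q) ℝ :=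
  Matrix.of fun l1 l2 =>
    (1 / (M.n * M.p : ℝ)) * ∑ k, ∑ i,
      (M.Yd R k 0 ω i l1 - M.YbarRowd R 0 l1 ω) * (M.Yd R k 1 ω i l2 - M.YbarRowd R 1 l2 ω)

/-- The variance-corrected estimator `Θ̂^{(d)}_{i,j}` (temporal covariances unknown). -/
def Θhatd (i j : Fin M.p) (ω : M.Ω) : ℝ :=
  M.θhatd R b 0 i j ω + M.θhatd R b 1 i j ω
    - (2 / (M.n * M.q : ℝ))
      * (M.ϱhatd R b i i ω * M.ϱhatd R b j j ω + M.ϱhatd R b i j ω * M.ϱhatd R b j i ω)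
      * ((M.q : ℝ) * frobSq (M.Phatd R ω) / (Matrix.trace (M.Phatd R ω)) ^ 2)

/-- `ρ̂_{S_t,i,j}` in the data-driven case. -/
def ρShatd (t : Fin 2) (i j : Fin M.p) (ω : M.Ω) : ℝ :=
  M.rhatd R b t i j ω / Real.sqrt (M.rhatd R b t i i ω * M.rhatd R b t j j ω)

/-- The paired-test statistic `W_{i,j}` in the data-driven case. -/
def Wd (i j : Fin M.p) (ω : M.Ω) : ℝ :=
  (M.ρShatd R b 0 i j ω - M.ρShatd R b 1 i j ω) / Real.sqrt (M.Θhatd R b i j ω)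

/-- The column-precision matrices `(ω̂^{(t,d)}_{l,i,j}) = [Cov(X^{(t)} Σ̂_{T_t}^{-1/2})]⁻¹`. -/
def Ωhatd (t : Fin 2) (l : Fin M.q) : Matrix (Fin M.p) (Fin M.p) ℝ :=
  (Matrix.of fun i j =>
    cov M.μ (fun ω => M.Yd R ⟨0, M.npos⟩ t ω i l) (fun ω => M.Yd R ⟨0, M.npos⟩ t ω j l))⁻¹

/-- The sparsity level `s_{p,q}`. -/
def sPQ : ℕ :=
  ⨆ t : Fin 2, ⨆ l : Fin M.q, ⨆ i : Fin M.p,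
    ∑ j, max (if M.ΩS t i j ≠ 0 then 1 else 0) (if M.Ωhatd R t l i j ≠ 0 then 1 else 0)

/-- `log max(p, q, n)`. -/
def logMaxPQN : ℝ := Real.log (max (max M.p M.q) M.n)

/-- The rate `r^{(1)}_{n,p,q,t}` of assumption (A7). -/
def rate1 (t : Fin 2) : ℝ :=
  ((M.sPQ R : ℝ) * M.q * (M.logMaxPQN) ^ ((3 : ℝ) / 2) * (L1norm (M.ΩS t)) ^ 2)⁻¹

/-- The rate `r^{(2)}_{n,p,q,t}` of assumption (A7). -/
def rate2 (t : Fin 2) : ℝ :=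
  ((M.n * M.q : ℝ) * (M.sPQ R : ℝ) ^ 2 * Real.log M.p * (M.logMaxPQN) ^ 2) ^ (-(1 : ℝ) / 4)
    * ((M.q : ℝ) * (L1norm (M.ΩS t)) ^ 2)⁻¹

/-- `min_t min(r^{(1)}_{n,p,q,t}, r^{(2)}_{n,p,q,t})`. -/
def rateMin : ℝ :=
  min (min (M.rate1 R 0) (M.rate2 R 0)) (min (M.rate1 R 1) (M.rate2 R 1))

end DataDriven

/-- Mean of the true errors. -/
def εbar (t : Fin 2) (i : Fin M.p) (ω : M.Ω) : ℝ :=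
  (1 / (M.n * M.q : ℝ)) * ∑ k, ∑ l, M.ε k t i l ω

/-- `σ̂^{(t)}_{i,i,ε}`, the empirical variance of the true errors. -/
def σhatε (t : Fin 2) (i : Fin M.p) (ω : M.Ω) : ℝ :=
  (1 / (M.n * M.q : ℝ)) * ∑ k, ∑ l, (M.ε k t i l ω - M.εbar t i ω) ^ 2

/-- `R̃^{(t)}_{i,j}`, the empirical covariance of the true errors. -/
def Rtil (t : Fin 2) (i j : Fin M.p) (ω : M.Ω) : ℝ :=
  (1 / (M.n * M.q : ℝ)) * ∑ k, ∑ l,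
    (M.ε k t i l ω - M.εbar t i ω) * (M.ε k t j l ω - M.εbar t j ω)

/-- The set of true nulls `H₀`. -/
def H0fin : Finset (Fin M.p × Fin M.p) :=
  Finset.univ.filter fun pr => pr.1 < pr.2 ∧ M.ρS 0 pr.1 pr.2 = M.ρS 1 pr.1 pr.2

/-- `ℓ₀ = |H₀|`. -/
def ell0 : ℕ := M.H0fin.card

/-- All pairs `(i, j)` with `i < j`. -/
def allPairs : Finset (Fin M.p × Fin M.p) :=
  Finset.univ.filter fun pr => pr.1 < pr.2

/-- `ℓ = (p² − p)/2` as a real number. -/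
def ellR : ℝ := ((M.p : ℝ) ^ 2 - M.p) / 2

/-- The set `A_τ` of pairs with non-negligible precision entries. -/
def Atau (τ : ℝ) : Finset (Fin M.p × Fin M.p) :=
  Finset.univ.filter fun pr => pr.1 < pr.2 ∧
    ((Real.log M.p) ^ (-(2 : ℝ) - τ) ≤ |M.ΩS 0 pr.1 pr.2| ∨
      (Real.log M.p) ^ (-(2 : ℝ) - τ) ≤ |M.ΩS 1 pr.1 pr.2|)

/-- Cardinality of the signal set `S(η)` of assumption (A4). -/
def Scard (η : ℝ) : ℕ :=
  (Finset.univ.filter fun pr : Fin M.p × Fin M.p => pr.1 < pr.2 ∧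
    (Real.log M.p) ^ ((1 : ℝ) / 2 + η)
      ≤ |M.ρS 0 pr.1 pr.2 - M.ρS 1 pr.1 pr.2| / Real.sqrt (M.Θ pr.1 pr.2)).card

/-- Number of rejections at threshold `h` for a generic statistic `Wf`. -/
def rejections (Wf : Fin M.p → Fin M.p → M.Ω → ℝ) (h : ℝ) (ω : M.Ω) : ℕ :=
  (M.allPairs.filter fun pr => h ≤ |Wf pr.1 pr.2 ω|).card

/-- False discovery proportion at threshold `h`. -/
def FDP (Wf : Fin M.p → Fin M.p → M.Ω → ℝ) (h : ℝ) (ω : M.Ω) : ℝ :=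
  ((M.H0fin.filter fun pr => h ≤ |Wf pr.1 pr.2 ω|).card : ℝ)
    / max (M.rejections Wf h ω : ℝ) 1

/-- Estimated false discovery proportion `F̂DP(h)`. -/
def FDPhat (Wf : Fin M.p → Fin M.p → M.Ω → ℝ) (h : ℝ) (ω : M.Ω) : ℝ :=
  2 * (1 - Phi h) * (((M.p : ℝ) ^ 2 - M.p) / 2) / max (M.rejections Wf h ω : ℝ) 1

open Classical in
/-- The data-driven threshold `ĥ_α`. -/
def hhat (Wf : Fin M.p → Fin M.p → M.Ω → ℝ) (α : ℝ) (ω : M.Ω) : ℝ :=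
  if h : {h : ℝ | 0 ≤ h ∧ h ≤ 2 * Real.sqrt (Real.log M.p) ∧ M.FDPhat Wf h ω ≤ α}.Nonempty
  then sInf {h : ℝ | 0 ≤ h ∧ h ≤ 2 * Real.sqrt (Real.log M.p) ∧ M.FDPhat Wf h ω ≤ α}
  else 2 * Real.sqrt (Real.log M.p)

/-- `FDP(ĥ_α)`. -/
def FDPsel (Wf : Fin M.p → Fin M.p → M.Ω → ℝ) (α : ℝ) (ω : M.Ω) : ℝ :=
  M.FDP Wf (M.hhat Wf α ω) ω

/-- `FDR(ĥ_α) = E[FDP(ĥ_α)]`. -/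
def FDRsel (Wf : Fin M.p → Fin M.p → M.Ω → ℝ) (α : ℝ) : ℝ :=
  ∫ ω, M.FDPsel Wf α ω ∂M.μ

/-- `Z_{k,m,l}` for the pair `pr = (i_m, j_m)`. -/
def Zr (k : Fin M.n) (pr : Fin M.p × Fin M.p) (l : Fin M.q) (ω : M.Ω) : ℝ :=
  (M.ε k 1 pr.1 l ω * M.ε k 1 pr.2 l ω - M.ε k 0 pr.1 l ω * M.ε k 0 pr.2 l ω)
    - ∫ ω', (M.ε k 1 pr.1 l ω' * M.ε k 1 pr.2 l ω'
        - M.ε k 0 pr.1 l ω' * M.ε k 0 pr.2 l ω') ∂M.μ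

/-- The truncation level `τ_n = 32 log(p + nq)`. -/
def τn : ℝ := 32 * Real.log ((M.p : ℝ) + M.n * M.q)

/-- `Θ_m = Var(ε^{(1)}_{k,i_m,l} ε^{(1)}_{k,j_m,l} − ε^{(2)}_{k,i_m,l} ε^{(2)}_{k,j_m,l})`. -/
def Θm (pr : Fin M.p × Fin M.p) : ℝ :=
  ProbabilityTheory.variance (fun ω =>
    M.ε ⟨0, M.npos⟩ 0 pr.1 ⟨0, M.qpos⟩ ω * M.ε ⟨0, M.npos⟩ 0 pr.2 ⟨0, M.qpos⟩ ω
      - M.ε ⟨0, M.npos⟩ 1 pr.1 ⟨0, M.qpos⟩ ω * M.ε ⟨0, M.npos⟩ 1 pr.2 ⟨0, M.qpos⟩ ω) M.μ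

/-- Truncated `Z`. -/
def Ztrunc (k : Fin M.n) (pr : Fin M.p × Fin M.p) (l : Fin M.q) (ω : M.Ω) : ℝ :=
  if |M.Zr k pr l ω| ≤ M.τn then M.Zr k pr l ω else 0

/-- `Ẑ_{k,m,l}`, the centered truncation of `Z_{k,m,l}`. -/
def Zhat (k : Fin M.n) (pr : Fin M.p × Fin M.p) (l : Fin M.q) (ω : M.Ω) : ℝ :=
  M.Ztrunc k pr l ω - ∫ ω', M.Ztrunc k pr l ω' ∂M.μ

/-- `V_m`. -/
def Vm (pr : Fin M.p × Fin M.p) (ω : M.Ω) : ℝ :=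
  (Real.sqrt ((M.n * M.q : ℝ) * M.Θm pr))⁻¹ * ∑ k, ∑ l, M.Zr k pr l ω

/-- `V̂_m`. -/
def Vhatm (pr : Fin M.p × Fin M.p) (ω : M.Ω) : ℝ :=
  (Real.sqrt ((M.n * M.q : ℝ) * M.Θm pr))⁻¹ * ∑ k, ∑ l, M.Zhat k pr l ω

/-- Row-pooled means of the raw data. -/
def XbarRow (t : Fin 2) (l : Fin M.q) (ω : M.Ω) : ℝ :=
  (1 / (M.n * M.p : ℝ)) * ∑ k, ∑ i, M.X k t ω i l

/-- The pooled sample cross-temporal covariance `Σ̂_{T_{1,2}}`. -/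
def ShatT12 (ω : M.Ω) : Matrix (Fin M.q) (Fin M.q) ℝ :=
  Matrix.of fun l1 l2 =>
    (1 / (M.n * M.p : ℝ)) * ∑ k, ∑ i,
      (M.X k 0 ω i l1 - M.XbarRow 0 l1 ω) * (M.X k 1 ω i l2 - M.XbarRow 1 l2 ω)

end PairedModel

/-- `F ν = o_p(a ν)` along a sequence of models. -/
def SeqLittleOP (M : ℕ → PairedModel) (F : ∀ ν, (M ν).Ω → ℝ) (a : ℕ → ℝ) : Prop :=
  ∀ ε : ℝ, 0 < ε →
    Tendsto (fun ν => (M ν).μ {ω | ε * |a ν| < |F ν ω|}) atTop (nhds 0)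

/-- `F ν = O_p(a ν)` along a sequence of models. -/
def SeqBigOP (M : ℕ → PairedModel) (F : ∀ ν, (M ν).Ω → ℝ) (a : ℕ → ℝ) : Prop :=
  ∀ ε : ℝ, 0 < ε → ∃ C : ℝ, 0 < C ∧
    ∀ᶠ ν in atTop, (M ν).μ {ω | C * |a ν| < |F ν ω|} ≤ ENNReal.ofReal ε

/-- The dimensions diverge along the sequence of models. -/
def DimsTendsto (M : ℕ → PairedModel) : Prop :=
  Tendsto (fun ν => (M ν).n) atTop atTop ∧ Tendsto (fun ν => (M ν).p) atTop atTop ∧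
    Tendsto (fun ν => (M ν).q) atTop atTop

/-- Assumption (A2): `|A_τ ∩ H₀| = o(p^ν)` for every `ν > 0`. -/
def A2seq (M : ℕ → PairedModel) (τ : ℝ) : Prop :=
  ∀ e : ℝ, 0 < e →
    Tendsto (fun k => ((((M k).Atau τ) ∩ (M k).H0fin).card : ℝ) / ((M k).p : ℝ) ^ e)
      atTop (nhds 0)

/-- Assumption (A3): `log p = o((nq)^{1/5})` and `q = o(np/(log p)²)`. -/
def A3seq (M : ℕ → PairedModel) : Prop :=
  Tendsto (fun ν => Real.log ((M ν).p) / (((M ν).n * (M ν).q : ℝ)) ^ ((1 : ℝ) / 5))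
      atTop (nhds 0) ∧
  Tendsto (fun ν => ((M ν).q : ℝ) * (Real.log ((M ν).p)) ^ 2 / (((M ν).n : ℝ) * (M ν).p))
      atTop (nhds 0)

/-- Assumption (A4): the number of strong signals is at least
`[((8π)^{1/2} α)⁻¹ + δ](log log p)^{1/2}`. -/
def A4seq (M : ℕ → PairedModel) (α : ℝ) : Prop :=
  ∃ η δ : ℝ, 0 < η ∧ 0 < δ ∧ ∀ ν,
    (1 / (Real.sqrt (8 * Real.pi) * α) + δ) * Real.sqrt (Real.log (Real.log ((M ν).p)))
      ≤ ((M ν).Scard η : ℝ)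

/-- Assumption (A5)/(A6): rates of the regression coefficient estimators. -/
def A5seq (M : ℕ → PairedModel)
    (b : ∀ ν, Fin 2 → Fin (M ν).p → (M ν).Ω → Fin (M ν).p → ℝ) : Prop :=
  ∀ t : Fin 2,
    SeqLittleOP M
      (fun ν ω => ⨆ i, ∑ j ∈ Finset.univ.erase i, |b ν t i ω j - (M ν).β t i j|)
      (fun ν => ((M ν).logMaxPQN)⁻¹) ∧
    SeqLittleOP M
      (fun ν ω => ⨆ i, Real.sqrt (∑ j ∈ Finset.univ.erase i, (b ν t i ω j - (M ν).β t i j) ^ 2))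
      (fun ν => (((M ν).n * (M ν).q : ℝ) * Real.log ((M ν).p)) ^ (-(1 : ℝ) / 4))

/-- Assumption (A7): rate of the estimator of `Σ_{T_t}^{-1/2}`. -/
def A7seq (M : ℕ → PairedModel)
    (R : ∀ ν, Fin 2 → (M ν).Ω → Matrix (Fin (M ν).q) (Fin (M ν).q) ℝ) : Prop :=
  ∃ c : ℝ, 0 < c ∧ ∃ rr : ℕ → ℝ,
    (∀ t : Fin 2, SeqLittleOP M
        (fun ν ω => ⨆ l1, ⨆ l2, |R ν t ω l1 l2 - c * (M ν).invSqrtT t l1 l2|) rr) ∧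
    Tendsto (fun ν => rr ν / (M ν).rateMin (R ν)) atTop (nhds 0)


/-!
Both regression errors are linear in the Gaussian data,
`ε^{(t)}_{k,i,l} = ω_{S_t,i,i}⁻¹ ∑_{m,s} ω_{S_t,i,m} (Σ_{T_t}^{-1/2})_{s,l} X^{(t)}_{k,m,s}`,
so the expectation of their product is a bilinear form in the cross-covariance
`Σ_{S_{1,2}} ⊗ Σ_{T_{1,2}}`. Because of the Kronecker structure it factors as
`(Ω_{S_1} Σ_{S_{1,2}} Ω_{S_2})_{i,j} (P_{T_{1,2}})_{l,l} / (ω_{S_1,i,i} ω_{S_2,j,j})`; summing over `l`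
gives the trace, and `r^{(t)}_{i,i} = ω_{S_t,i,i}⁻¹` turns the prefactor into the one claimed.
The cross moments of the data are obtained by polarization from the one-dimensional Gaussian
laws of linear combinations.
-/

open MeasureTheory ProbabilityTheory

lemma integral_sq_gaussianReal_zero (v : NNReal) : ∫ x, x ^ 2 ∂gaussianReal 0 v = v := by
  simpa [integral_id_gaussianReal] using
    (variance_eq_integral (μ := gaussianReal 0 v) measurable_id.aemeasurable).symm.trans
      variance_id_gaussianReal

namespace IsCenteredGaussianFamily

variable {Ω ι : Type*} [MeasurableSpace Ω] {μ : Measure Ω} [Fintype ι] {Z : ι → Ω → ℝ}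
  {C : Matrix ι ι ℝ}

lemma integrable_sq_sum (hG : IsCenteredGaussianFamily μ Z C) (hZ : ∀ i, Measurable (Z i))
    (c : ι → ℝ) : Integrable (fun ω => (∑ i, c i * Z i ω) ^ 2) μ := by
  have hL : Measurable fun ω => ∑ i, c i * Z i ω := by fun_prop
  have h : Integrable (fun x : ℝ => x ^ 2) (μ.map fun ω => ∑ i, c i * Z i ω) := by
    rw [hG c]; exact (memLp_id_gaussianReal 2).integrable_sq
  exact (integrable_map_measure (by fun_prop) hL.aemeasurable).1 h

lemma integral_sq_sum (hG : IsCenteredGaussianFamily μ Z C) (hZ : ∀ i, Measurable (Z i))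
    (c : ι → ℝ) :
    ∫ ω, (∑ i, c i * Z i ω) ^ 2 ∂μ = (∑ i, ∑ j, c i * C i j * c j).toNNReal := by
  have hL : Measurable fun ω => ∑ i, c i * Z i ω := by fun_prop
  rw [← integral_map (f := fun x : ℝ => x ^ 2) hL.aemeasurable (by fun_prop), hG c,
    integral_sq_gaussianReal_zero]

lemma integrable_sq (hG : IsCenteredGaussianFamily μ Z C) (hZ : ∀ i, Measurable (Z i)) (a : ι) :
    Integrable (fun ω => Z a ω ^ 2) μ := by
  classical
  simpa [Pi.single_apply] using hG.integrable_sq_sum hZ (Pi.single a 1)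

lemma integrable_add_sq (hG : IsCenteredGaussianFamily μ Z C) (hZ : ∀ i, Measurable (Z i))
    (a b : ι) : Integrable (fun ω => (Z a ω + Z b ω) ^ 2) μ := by
  classical
  have h := hG.integrable_sq_sum hZ (Pi.single a 1 + Pi.single b 1)
  simp only [Pi.add_apply, add_mul, Finset.sum_add_distrib, Pi.single_apply, ite_mul, one_mul,
    zero_mul, Finset.sum_ite_eq', Finset.mem_univ, if_true] at h
  exact h

lemma integrable_mul (hG : IsCenteredGaussianFamily μ Z C) (hZ : ∀ i, Measurable (Z i))
    (a b : ι) : Integrable (fun ω => Z a ω * Z b ω) μ :=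
  ((((hG.integrable_add_sq hZ a b).sub (hG.integrable_sq hZ a)).sub
    (hG.integrable_sq hZ b)).div_const 2).congr (.of_forall fun ω => by simp only [Pi.sub_apply]; ring)

lemma integral_mul (hG : IsCenteredGaussianFamily μ Z C) (hZ : ∀ i, Measurable (Z i))
    (hC : C.PosSemidef) (a b : ι) : ∫ ω, Z a ω * Z b ω ∂μ = C a b := by
  classical
  have hQ (c : ι → ℝ) : 0 ≤ ∑ i, ∑ j, c i * C i j * c j := by
    simpa [dotProduct, mulVec, Finset.mul_sum, mul_assoc] using hC.dotProduct_mulVec_nonneg c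
  have hsq (c : ι → ℝ) := hG.integral_sq_sum hZ c
  simp only [Real.coe_toNNReal _ (hQ _)] at hsq
  have ha := hsq (Pi.single a 1)
  have hb := hsq (Pi.single b 1)
  have hab := hsq (Pi.single a 1 + Pi.single b 1)
  simp only [Pi.add_apply, add_mul, mul_add, Finset.sum_add_distrib, Pi.single_apply, ite_mul,
    one_mul, zero_mul, mul_ite, mul_one, mul_zero, Finset.sum_ite_eq', Finset.mem_univ,
    if_true] at ha hb hab
  have hia := hG.integrable_sq hZ a
  have hiab := hG.integrable_add_sq hZ a b
  calc ∫ ω, Z a ω * Z b ω ∂μ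
      = ∫ ω, ((Z a ω + Z b ω) ^ 2 - Z a ω ^ 2 - Z b ω ^ 2) / 2 ∂μ :=
        integral_congr_ae (.of_forall fun ω => by ring)
    _ = ((∫ ω, (Z a ω + Z b ω) ^ 2 ∂μ) - (∫ ω, Z a ω ^ 2 ∂μ) - ∫ ω, Z b ω ^ 2 ∂μ) / 2 := by
        rw [integral_div, integral_sub _ (hG.integrable_sq hZ b), integral_sub hiab hia]
        exact hiab.sub hia
    _ = C a b := by
        have hba : C b a = C a b := by simpa using hC.1.apply a b
        rw [hab, ha, hb, hba]
        ring

end IsCenteredGaussianFamily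

theorem Fintype.sum_sum_prod_mul {R α β : Type*} [CommSemiring R] [Fintype α] [Fintype β]
    (f : α → α → R) (g : β → β → R) :
    ∑ x : α × β, ∑ y : α × β, f x.1 y.1 * g x.2 y.2 = (∑ a, ∑ a', f a a') * ∑ b, ∑ b', g b b' := by
  simp only [Fintype.sum_prod_type, Finset.sum_mul_sum]

theorem Finset.sum_mul_mul_sum_mul {R ι κ : Type*} [CommSemiring R] (s : Finset ι)
    (s' : Finset κ) (u x : ι → R) (v y : κ → R) :
    (∑ a ∈ s, u a * x a) * (∑ b ∈ s', v b * y b) = ∑ a ∈ s, ∑ b ∈ s', u a * v b * (x a * y b) := by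
  rw [Finset.sum_mul_sum]
  exact Finset.sum_congr rfl fun a _ => Finset.sum_congr rfl fun b _ => by ring

section Bilinear

variable {Ω ι κ : Type*} [MeasurableSpace Ω] {μ : Measure Ω} [Fintype ι] [Fintype κ]
  {X : ι → Ω → ℝ} {Y : κ → Ω → ℝ}

lemma integrable_sum_mul_mul_sum_mul (h : ∀ a b, Integrable (fun ω => X a ω * Y b ω) μ)
    (u : ι → ℝ) (v : κ → ℝ) :
    Integrable (fun ω => (∑ a, u a * X a ω) * (∑ b, v b * Y b ω)) μ := by
  simp only [Finset.sum_mul_mul_sum_mul]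
  exact integrable_finsetSum _ fun a _ => integrable_finsetSum _ fun b _ => (h a b).const_mul _

lemma integral_sum_mul_mul_sum_mul (h : ∀ a b, Integrable (fun ω => X a ω * Y b ω) μ)
    (u : ι → ℝ) (v : κ → ℝ) :
    ∫ ω, (∑ a, u a * X a ω) * (∑ b, v b * Y b ω) ∂μ
      = ∑ a, ∑ b, u a * v b * ∫ ω, X a ω * Y b ω ∂μ := by
  simp only [Finset.sum_mul_mul_sum_mul]
  rw [integral_finsetSum _ fun a _ =>
    integrable_finsetSum _ fun b _ => (h a b).const_mul _]
  refine Finset.sum_congr rfl fun a _ => ?_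
  rw [integral_finsetSum _ fun b _ => (h a b).const_mul _]
  simp only [integral_const_mul]

end Bilinear

namespace PairedModel

variable (M : PairedModel)

lemma ΩS_diag_pos (t : Fin 2) (a : Fin M.p) : 0 < M.ΩS t a a :=
  (M.hSigS t).inv.diag_pos

lemma r_self (t : Fin 2) (a : Fin M.p) : M.r t a a = (M.ΩS t a a)⁻¹ := by
  have := (M.ΩS_diag_pos t a).ne'
  rw [r]
  field_simp

lemma ΩS_comm (t : Fin 2) (a b : Fin M.p) : M.ΩS t a b = M.ΩS t b a := by
  simpa [ΩS] using (M.hSigS t).inv.1.apply b a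

lemma invSqrtT_comm (t : Fin 2) (s l : Fin M.q) : M.invSqrtT t s l = M.invSqrtT t l s := by
  have h : (M.invSqrtT t).IsHermitian :=
    (isHermitian_mul_mul_conjTranspose _ (isHermitian_diagonal _)).inv
  simpa using h.apply l s

lemma PT12_apply_self (l : Fin M.q) :
    M.PT12 l l = ∑ s, ∑ s', M.invSqrtT 0 s l * M.SigT12 s s' * M.invSqrtT 1 s' l := by
  simp only [PT12, mul_apply, Finset.sum_mul]
  rw [Finset.sum_comm]
  simp only [M.invSqrtT_comm 0 l]

lemma ε_eq_sum (k : Fin M.n) (t : Fin 2) (a : Fin M.p) (l : Fin M.q) (ω : M.Ω) :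
    M.ε k t a l ω = ∑ x : Fin M.p × Fin M.q,
      M.ΩS t a x.1 / M.ΩS t a a * M.invSqrtT t x.2 l * M.X k t ω x.1 x.2 := by
  calc M.ε k t a l ω = ∑ m, M.ΩS t a m / M.ΩS t a a * M.Y k t ω m l := by
        rw [ε, ← Finset.add_sum_erase _ _ (Finset.mem_univ a), div_self (M.ΩS_diag_pos t a).ne',
          one_mul, sub_eq_add_neg, ← Finset.sum_neg_distrib]
        simp only [β, neg_div, neg_mul, neg_neg]
    _ = _ := by
        simp only [Y, mul_apply, Finset.mul_sum, Fintype.sum_prod_type]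
        exact Finset.sum_congr rfl fun m _ => Finset.sum_congr rfl fun s _ => by ring

lemma integrable_X_mul_X (k : Fin M.n) (x y : Fin M.p × Fin M.q) :
    Integrable (fun ω => M.X k 0 ω x.1 x.2 * M.X k 1 ω y.1 y.2) M.μ :=
  (M.gaussX k).integrable_mul (fun tl => M.measX k tl.1 tl.2.1 tl.2.2) (0, x) (1, y)

lemma integral_X_mul_X (k : Fin M.n) (x y : Fin M.p × Fin M.q) :
    ∫ ω, M.X k 0 ω x.1 x.2 * M.X k 1 ω y.1 y.2 ∂M.μ = M.SigS12 x.1 y.1 * M.SigT12 x.2 y.2 := by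
  simpa [pairCov] using
    (M.gaussX k).integral_mul (fun tl => M.measX k tl.1 tl.2.1 tl.2.2) M.hSig (0, x) (1, y)

lemma integrable_ε_mul_ε (k : Fin M.n) (i j : Fin M.p) (l : Fin M.q) :
    Integrable (fun ω => M.ε k 0 i l ω * M.ε k 1 j l ω) M.μ := by
  simp only [ε_eq_sum]
  exact integrable_sum_mul_mul_sum_mul (M.integrable_X_mul_X k) _ _

lemma integral_ε_mul_ε (k : Fin M.n) (i j : Fin M.p) (l : Fin M.q) :
    ∫ ω, M.ε k 0 i l ω * M.ε k 1 j l ω ∂M.μ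
      = (M.ΩS 0 i i * M.ΩS 1 j j)⁻¹ * (∑ a, ∑ b, M.ΩS 0 i a * M.SigS12 a b * M.ΩS 1 b j)
          * M.PT12 l l := by
  simp only [ε_eq_sum]
  rw [integral_sum_mul_mul_sum_mul (M.integrable_X_mul_X k)]
  simp only [integral_X_mul_X]
  rw [M.PT12_apply_self, mul_assoc, ← Fintype.sum_sum_prod_mul]
  simp only [Finset.mul_sum]
  refine Finset.sum_congr rfl fun x _ => Finset.sum_congr rfl fun y _ => ?_
  rw [M.ΩS_comm 1 j y.1]
  ring

end PairedModel

/-- The expectation of the pooled cross products of the errors. -/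
theorem statement_4 (M : PairedModel) (i j : Fin M.p) :
    (∫ ω, (1 / (M.n * M.q : ℝ)) * ∑ k, ∑ l, M.ε k 0 i l ω * M.ε k 1 j l ω ∂M.μ)
      = Real.sqrt (M.r 0 i i * M.r 1 j j) * M.ρS12 i j * Matrix.trace M.PT12 / M.q := by
  have hint (k : Fin M.n) (l : Fin M.q) := M.integrable_ε_mul_ε k i j l
  rw [integral_const_mul, integral_finsetSum _ fun k _ => integrable_finsetSum _ fun l _ => hint k l]
  simp only [integral_finsetSum _ fun l _ => hint _ l, M.integral_ε_mul_ε, ← Finset.mul_sum,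
    Finset.sum_const, Finset.card_univ, Fintype.card_fin, nsmul_eq_mul]
  have hr : Real.sqrt (M.r 0 i i * M.r 1 j j) * Real.sqrt (M.r 0 i i * M.r 1 j j)
      = M.r 0 i i * M.r 1 j j := by
    have := M.ΩS_diag_pos 0 i
    have := M.ΩS_diag_pos 1 j
    exact Real.mul_self_sqrt (by rw [M.r_self, M.r_self]; positivity)
  rw [PairedModel.ρS12, ← mul_assoc (Real.sqrt _), hr, M.r_self, M.r_self]
  simp only [trace, diag_apply]
  have := M.npos
  field_simp

end
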